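/- arXiv:1503.07937 — 4 statements merged into one kernel-verified Lean document; each statement's English description precedes it below -/
import Mathlib

section
/- Fix 0 < ε < 1, integers n, N ≥ 1, and a group G with an n-element subset S. Let (π_t)_{t∈T'} be a family of pairwise non-equivalent irreducible unitary representations of G, all of dimension N, such that their direct sum π = ⊕_t π_t satisfies λ(π ⊗ π̄, S) ≤ 1 − ε. Then |T'| ≤ (1 + 2/√(2ε))^{2nN²}; in particular |T'| ≤ exp(c_ε n N²) for a constant c_ε depending only on ε. -/
open Matrix

noncomputable def lamT {G : Type} [Group G] {m : Type} [Fintype m]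
    (S : Finset G) (A B : G → Matrix m m ℂ) : ℝ :=
  (S.card : ℝ)⁻¹ * sSup {r : ℝ | ∃ x : Matrix m m ℂ, (xᴴ * x).trace = 1 ∧
    (∀ y : Matrix m m ℂ, (∀ g : G, A g * y = y * B g) → (yᴴ * x).trace = 0) ∧
    r = (∑ s ∈ S, (xᴴ * (A s * x * (B s)ᴴ)).trace).re}

def IsIrredRep {G : Type} [Group G] {k : ℕ}
    (π : G →* Matrix.unitaryGroup (Fin k) ℂ) : Prop :=
  ∀ W : Submodule ℂ (Fin k → ℂ),
    (∀ g : G, ∀ v ∈ W, (π g : Matrix (Fin k) (Fin k) ℂ).mulVec v ∈ W) → W = ⊥ ∨ W = ⊤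

def UnitarilyEquiv {G : Type} [Group G] {k l : ℕ}
    (π₁ : G →* Matrix.unitaryGroup (Fin k) ℂ)
    (π₂ : G →* Matrix.unitaryGroup (Fin l) ℂ) : Prop :=
  ∃ U : Matrix (Fin l) (Fin k) ℂ, Uᴴ * U = 1 ∧ U * Uᴴ = 1 ∧
    ∀ g : G, U * (π₁ g : Matrix (Fin k) (Fin k) ℂ) = (π₂ g : Matrix (Fin l) (Fin l) ℂ) * U

section AuxPacking
open MeasureTheory Metric


lemma packing {d : ℕ} {ι : Type*} [Fintype ι] (y : ι → EuclideanSpace ℝ (Fin d))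
    {δ : ℝ} (hδ : 0 < δ) (hy : ∀ i, ‖y i‖ ≤ 1)
    (hsep : ∀ i j, i ≠ j → δ ≤ ‖y i - y j‖) :
    (Fintype.card ι : ℝ) ≤ (1 + 2 / δ) ^ d := by
  classical
  set μ : Measure (EuclideanSpace ℝ (Fin d)) := volume with hμ
  have hdisj : Pairwise (Function.onFun Disjoint (fun i => ball (y i) (δ/2))) := by
    intro i j hij
    apply ball_disjoint_ball
    rw [dist_eq_norm]
    linarith [hsep i j hij]
  have hsub : ∀ i, ball (y i) (δ/2) ⊆ ball (0 : EuclideanSpace ℝ (Fin d)) (1 + δ/2) := by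
    intro i z hz
    simp only [mem_ball, dist_eq_norm] at hz ⊢
    have : ‖z‖ ≤ ‖y i‖ + ‖z - y i‖ := norm_le_insert' _ _
    have h2 := hy i
    rw [sub_zero]
    linarith
  have hm : μ (⋃ i, ball (y i) (δ/2)) = ∑ i, μ (ball (y i) (δ/2)) := by
    rw [measure_iUnion hdisj (fun i => measurableSet_ball)]
    exact tsum_fintype _
  have hball : ∀ i, μ (ball (y i) (δ/2)) =
      ENNReal.ofReal ((δ/2) ^ (Module.finrank ℝ (EuclideanSpace ℝ (Fin d)))) * μ (ball 0 1) :=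
    fun i => Measure.addHaar_ball_of_pos μ (y i) (by linarith)
  have hbig : μ (ball (0 : EuclideanSpace ℝ (Fin d)) (1 + δ/2)) =
      ENNReal.ofReal ((1 + δ/2) ^ (Module.finrank ℝ (EuclideanSpace ℝ (Fin d)))) * μ (ball 0 1) :=
    Measure.addHaar_ball_of_pos μ _ (by linarith)
  have hle : (Fintype.card ι) * (ENNReal.ofReal ((δ/2) ^ (Module.finrank ℝ (EuclideanSpace ℝ (Fin d)))) * μ (ball 0 1))
      ≤ ENNReal.ofReal ((1 + δ/2) ^ (Module.finrank ℝ (EuclideanSpace ℝ (Fin d)))) * μ (ball 0 1) := by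
    rw [← hbig]
    calc (Fintype.card ι) * (ENNReal.ofReal ((δ/2) ^ (Module.finrank ℝ (EuclideanSpace ℝ (Fin d)))) * μ (ball 0 1))
        = ∑ i : ι, μ (ball (y i) (δ/2)) := by
          simp [hball, Finset.sum_const]
      _ = μ (⋃ i, ball (y i) (δ/2)) := hm.symm
      _ ≤ μ (ball (0 : EuclideanSpace ℝ (Fin d)) (1 + δ/2)) :=
          measure_mono (Set.iUnion_subset hsub)
  have hV0 : μ (ball (0 : EuclideanSpace ℝ (Fin d)) 1) ≠ 0 :=
    (measure_ball_pos μ 0 one_pos).ne'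
  have hVt : μ (ball (0 : EuclideanSpace ℝ (Fin d)) 1) ≠ ⊤ := measure_ball_lt_top.ne
  have hle2 : (Fintype.card ι) * ENNReal.ofReal ((δ/2) ^ (Module.finrank ℝ (EuclideanSpace ℝ (Fin d))))
      ≤ ENNReal.ofReal ((1 + δ/2) ^ (Module.finrank ℝ (EuclideanSpace ℝ (Fin d)))) := by
    exact (ENNReal.mul_le_mul_iff_left hV0 hVt).mp (by rw [mul_assoc]; exact hle)
  have hfr : Module.finrank ℝ (EuclideanSpace ℝ (Fin d)) = d := by
    simp [finrank_euclideanSpace]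
  rw [hfr] at hle2
  have hpos : (0:ℝ) < (δ/2) ^ d := pow_pos (by linarith) d
  have := (ENNReal.le_ofReal_iff_toReal_le (by
      exact ENNReal.mul_ne_top (by simp) ENNReal.ofReal_ne_top) (by positivity)).mp hle2
  rw [ENNReal.toReal_mul, ENNReal.toReal_ofReal hpos.le] at this
  simp only [ENNReal.toReal_natCast] at this
  have hcard : (Fintype.card ι : ℝ) ≤ (1 + δ/2) ^ d / (δ/2) ^ d :=
    (le_div_iff₀ hpos).mpr this
  have key : (1 + δ/2)/(δ/2) = 1 + 2/δ := by
    field_simp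
    ring
  calc (Fintype.card ι : ℝ) ≤ (1 + δ/2) ^ d / (δ/2) ^ d := hcard
    _ = ((1 + δ/2) / (δ/2)) ^ d := by rw [← div_pow]
    _ = (1 + 2/δ) ^ d := by rw [key]

end AuxPacking


noncomputable def toE {m : Type} [Fintype m] (a : Matrix m m ℂ) : EuclideanSpace ℂ (m × m) :=
  (WithLp.equiv 2 ((m × m) → ℂ)).symm (fun p => a p.1 p.2)

lemma toE_apply {m : Type} [Fintype m] (a : Matrix m m ℂ) (p : m × m) :
    toE a p = a p.1 p.2 := rfl

lemma trace_conj_mul {m : Type} [Fintype m] (a b : Matrix m m ℂ) :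
    (aᴴ * b).trace = ∑ p : m × m, (starRingEnd ℂ) (a p.1 p.2) * b p.1 p.2 := by
  rw [Matrix.trace, Fintype.sum_prod_type]
  simp only [Matrix.diag_apply, Matrix.mul_apply, Matrix.conjTranspose_apply]
  exact Finset.sum_comm

lemma inner_mat {m : Type} [Fintype m] (a b : Matrix m m ℂ) :
    (inner ℂ (toE a) (toE b) : ℂ) = (aᴴ * b).trace := by
  rw [trace_conj_mul, PiLp.inner_apply]
  simp only [RCLike.inner_apply']
  rfl

lemma norm_mat {m : Type} [Fintype m] (a : Matrix m m ℂ) :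
    ‖toE a‖ ^ 2 = ((aᴴ * a).trace).re := by
  rw [← inner_mat a a, ← RCLike.re_to_complex, inner_self_eq_norm_sq]

lemma cs_bound {m : Type} [Fintype m] [DecidableEq m] (u x : Matrix m m ℂ)
    (hu : u ∈ Matrix.unitaryGroup m ℂ) (hx : (xᴴ * x).trace = 1) :
    ((xᴴ * (u * x * uᴴ)).trace).re ≤ 1 := by
  classical
  have huu : uᴴ * u = 1 := by
    have := (Unitary.mem_iff.mp hu).1
    simpa [Matrix.star_eq_conjTranspose] using this
  set M := u * x * uᴴ with hM
  have hMtr : (Mᴴ * M).trace = 1 := by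
    have h4 : Mᴴ * M = u * (xᴴ * (x * uᴴ)) := by
      rw [hM]
      simp only [Matrix.conjTranspose_mul, Matrix.conjTranspose_conjTranspose, Matrix.mul_assoc]
      have h3 : uᴴ * (u * (x * uᴴ)) = x * uᴴ := by
        rw [← Matrix.mul_assoc, huu, Matrix.one_mul]
      rw [h3]
    rw [h4, Matrix.trace_mul_comm u (xᴴ * (x * uᴴ)), Matrix.mul_assoc,
      Matrix.mul_assoc x uᴴ u, huu, Matrix.mul_one, hx]
  have hxn : ‖toE x‖ = 1 := by
    have := norm_mat x
    rw [hx] at this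
    simp only [Complex.one_re] at this
    nlinarith [norm_nonneg (toE x)]
  have hMn : ‖toE M‖ = 1 := by
    have := norm_mat M
    rw [hMtr] at this
    simp only [Complex.one_re] at this
    nlinarith [norm_nonneg (toE M)]
  have h1 : (xᴴ * M).trace.re ≤ ‖(xᴴ * M).trace‖ := Complex.re_le_norm _
  have h2 : ‖(xᴴ * M).trace‖ ≤ 1 := by
    rw [← inner_mat x M]
    calc ‖(inner ℂ (toE x) (toE M) : ℂ)‖ ≤ ‖toE x‖ * ‖toE M‖ := norm_inner_le_norm _ _
      _ = 1 := by rw [hxn, hMn, mul_one]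
  exact le_trans h1 h2

lemma unitary_entries_sum {N : ℕ} (u : Matrix (Fin N) (Fin N) ℂ)
    (hu : u ∈ Matrix.unitaryGroup (Fin N) ℂ) :
    ∑ i, ∑ j, Complex.normSq (u i j) = N := by
  have huu : uᴴ * u = 1 := by
    have := (Unitary.mem_iff.mp hu).1
    simpa [Matrix.star_eq_conjTranspose] using this
  have h1 : (uᴴ * u).trace = N := by rw [huu, Matrix.trace_one]; simp
  have h2 : (uᴴ * u).trace = ∑ p : Fin N × Fin N, (Complex.normSq (u p.1 p.2) : ℂ) := by
    rw [trace_conj_mul]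
    congr 1; ext p
    rw [Complex.normSq_eq_conj_mul_self]
  rw [h2] at h1
  have := congrArg Complex.re h1
  simpa [Fintype.sum_prod_type] using this

lemma schur_scalar {G : Type} [Group G] {N : ℕ} (hN1 : 1 ≤ N)
    (π : G →* Matrix.unitaryGroup (Fin N) ℂ) (hirr : IsIrredRep π)
    (P : Matrix (Fin N) (Fin N) ℂ)
    (h : ∀ g : G, (π g : Matrix (Fin N) (Fin N) ℂ) * P = P * (π g : Matrix (Fin N) (Fin N) ℂ)) :
    ∃ c : ℂ, P = c • (1 : Matrix (Fin N) (Fin N) ℂ) := by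
  haveI : NeZero N := ⟨by omega⟩
  have : Nontrivial (Fin N → ℂ) := by
    refine Function.nontrivial
  obtain ⟨c, hc⟩ := Module.End.exists_eigenvalue (Matrix.mulVecLin P)
  refine ⟨c, ?_⟩
  set W := Module.End.eigenspace (Matrix.mulVecLin P) c with hW
  have hWne : W ≠ ⊥ := hc
  have hWinv : ∀ g : G, ∀ v ∈ W, (π g : Matrix (Fin N) (Fin N) ℂ).mulVec v ∈ W := by
    intro g v hv
    rw [hW, Module.End.mem_eigenspace_iff] at hv ⊢
    change P.mulVec ((π g : Matrix (Fin N) (Fin N) ℂ).mulVec v) = _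
    rw [Matrix.mulVec_mulVec, ← h g, ← Matrix.mulVec_mulVec]
    change (π g : Matrix (Fin N) (Fin N) ℂ).mulVec (P.mulVecLin v) = _
    rw [hv, Matrix.mulVec_smul]
  have hWtop : W = ⊤ := (hirr W hWinv).resolve_left hWne
  have hmv : ∀ v : Fin N → ℂ, P.mulVec v = c • v := by
    intro v
    have : v ∈ W := hWtop ▸ Submodule.mem_top
    rw [hW, Module.End.mem_eigenspace_iff] at this
    exact this
  ext i j
  have := congrFun (hmv (Pi.single j 1)) i
  rw [Matrix.mulVec_single] at this
  simp only [MulOpposite.op_one, one_smul, Matrix.col_apply] at this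
  rw [this]
  simp [Matrix.one_apply, Pi.single_apply]

lemma coe_inv_eq_star {N : ℕ} {G : Type} [Group G] (π : G →* Matrix.unitaryGroup (Fin N) ℂ)
    (g : G) : (π g⁻¹ : Matrix (Fin N) (Fin N) ℂ) = (π g : Matrix (Fin N) (Fin N) ℂ)ᴴ := by
  have h1 : (π g⁻¹ : Matrix (Fin N) (Fin N) ℂ) * (π g : Matrix (Fin N) (Fin N) ℂ) = 1 := by
    have : (π g⁻¹) * (π g) = 1 := by rw [← _root_.map_mul]; simp
    simpa using congrArg (Subtype.val) this
  have h2 : (π g : Matrix (Fin N) (Fin N) ℂ) * (π g : Matrix (Fin N) (Fin N) ℂ)ᴴ = 1 :=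
    (Unitary.mem_iff.mp (π g).2).2
  calc (π g⁻¹ : Matrix (Fin N) (Fin N) ℂ)
      = (π g⁻¹ : Matrix (Fin N) (Fin N) ℂ) * ((π g : Matrix (Fin N) (Fin N) ℂ) * (π g : Matrix (Fin N) (Fin N) ℂ)ᴴ) := by rw [h2, mul_one]
    _ = ((π g⁻¹ : Matrix (Fin N) (Fin N) ℂ) * (π g : Matrix (Fin N) (Fin N) ℂ)) * (π g : Matrix (Fin N) (Fin N) ℂ)ᴴ := by rw [mul_assoc]
    _ = (π g : Matrix (Fin N) (Fin N) ℂ)ᴴ := by rw [h1, one_mul]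

lemma schur_zero {G : Type} [Group G] {N : ℕ} (hN1 : 1 ≤ N)
    (π₁ π₂ : G →* Matrix.unitaryGroup (Fin N) ℂ)
    (hirr2 : IsIrredRep π₂) (hneq : ¬ UnitarilyEquiv π₁ π₂)
    (y : Matrix (Fin N) (Fin N) ℂ)
    (h : ∀ g : G, (π₁ g : Matrix (Fin N) (Fin N) ℂ) * y = y * (π₂ g : Matrix (Fin N) (Fin N) ℂ)) :
    y = 0 := by
  by_contra hy
  -- yᴴ intertwines the other way
  have hA : ∀ g : G, (π₂ g : Matrix (Fin N) (Fin N) ℂ) * yᴴ = yᴴ * (π₁ g : Matrix (Fin N) (Fin N) ℂ) := by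
    intro g
    have := congrArg Matrix.conjTranspose (h g⁻¹)
    rw [Matrix.conjTranspose_mul, Matrix.conjTranspose_mul, coe_inv_eq_star π₁ g,
      coe_inv_eq_star π₂ g, Matrix.conjTranspose_conjTranspose,
      Matrix.conjTranspose_conjTranspose] at this
    exact this.symm
  -- yᴴ y commutes with π₂
  have hP : ∀ g : G, (π₂ g : Matrix (Fin N) (Fin N) ℂ) * (yᴴ * y) = (yᴴ * y) * (π₂ g : Matrix (Fin N) (Fin N) ℂ) := by
    intro g
    calc (π₂ g : Matrix (Fin N) (Fin N) ℂ) * (yᴴ * y) = ((π₂ g : Matrix (Fin N) (Fin N) ℂ) * yᴴ) * y := by rw [mul_assoc]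
      _ = (yᴴ * (π₁ g : Matrix (Fin N) (Fin N) ℂ)) * y := by rw [hA g]
      _ = yᴴ * ((π₁ g : Matrix (Fin N) (Fin N) ℂ) * y) := by rw [mul_assoc]
      _ = yᴴ * (y * (π₂ g : Matrix (Fin N) (Fin N) ℂ)) := by rw [h g]
      _ = (yᴴ * y) * (π₂ g : Matrix (Fin N) (Fin N) ℂ) := by rw [mul_assoc]
  obtain ⟨c, hc⟩ := schur_scalar hN1 π₂ hirr2 (yᴴ * y) hP
  -- c = a / N with a > 0 real
  have htr : (yᴴ * y).trace = (∑ i, ∑ j, (Complex.normSq (y i j) : ℂ)) := by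
    rw [Matrix.trace]
    simp only [Matrix.diag_apply, Matrix.mul_apply, Matrix.conjTranspose_apply]
    rw [Finset.sum_comm]
    congr 1; ext i; congr 1; ext j
    rw [Complex.normSq_eq_conj_mul_self]
    rfl
  set a : ℝ := ∑ i, ∑ j, Complex.normSq (y i j) with ha
  have hnn : ∀ i ∈ (Finset.univ : Finset (Fin N)), (0:ℝ) ≤ ∑ j, Complex.normSq (y i j) :=
    fun i _ => Finset.sum_nonneg fun j _ => Complex.normSq_nonneg _
  have hapos : 0 < a := by
    have h0 : (0:ℝ) ≤ a := Finset.sum_nonneg hnn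
    rcases h0.lt_or_eq with h | h
    · exact h
    · exfalso; apply hy
      ext i j
      have h1 := (Finset.sum_eq_zero_iff_of_nonneg hnn).mp h.symm i (Finset.mem_univ i)
      have h2 := (Finset.sum_eq_zero_iff_of_nonneg
        (fun j _ => Complex.normSq_nonneg (y i j))).mp h1 j (Finset.mem_univ j)
      simpa using Complex.normSq_eq_zero.mp h2
  -- identify c
  have htrc : (yᴴ * y).trace = c * N := by
    rw [hc]
    simp [Matrix.trace_smul, Matrix.trace_one]
  have hca : (a : ℂ) = c * N := by
    rw [← htrc, htr, ha]
    push_cast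
    ring
  have hNpos : (0:ℝ) < N := by exact_mod_cast hN1
  have hc' : c = ((a / N : ℝ) : ℂ) := by
    have hNne : (N:ℂ) ≠ 0 := Nat.cast_ne_zero.mpr (by omega)
    rw [Complex.ofReal_div, Complex.ofReal_natCast, eq_div_iff hNne]
    exact hca.symm
  -- build unitary intertwiner
  set s : ℝ := (Real.sqrt (a / N))⁻¹ with hs
  set U : Matrix (Fin N) (Fin N) ℂ := (s : ℂ) • yᴴ with hU
  have hUH : Uᴴ = (s : ℂ) • y := by
    rw [hU, Matrix.conjTranspose_smul, Matrix.conjTranspose_conjTranspose]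
    congr 1
    simp
  have hsq : ((s : ℂ)) * ((s : ℂ)) * c = 1 := by
    rw [hc']
    have hpos : (0:ℝ) < a / N := div_pos hapos hNpos
    have : (s * s * (a / N) : ℝ) = 1 := by
      rw [hs, ← Real.sqrt_mul_self hpos.le]
      have h3 : Real.sqrt (a/N) ≠ 0 := by positivity
      field_simp
      rw [Real.sq_sqrt (by positivity)]
    exact_mod_cast congrArg (Complex.ofReal) this
  have hUU : U * Uᴴ = 1 := by
    rw [hU, hUH, Matrix.smul_mul, Matrix.mul_smul, hc, smul_smul, smul_smul, hsq, one_smul]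
  apply hneq
  refine ⟨U, mul_eq_one_comm.mp hUU, hUU, ?_⟩
  intro g
  rw [hU, Matrix.smul_mul, Matrix.mul_smul, ← hA g]

lemma pair_bound {G : Type} [Group G] (S : Finset G) {n N : ℕ} (hn : S.card = n)
    (hn1 : 1 ≤ n) (hN1 : 1 ≤ N) {ε : ℝ}
    {T' : Type} [Fintype T'] [DecidableEq T']
    (π : T' → G →* Matrix.unitaryGroup (Fin N) ℂ)
    (hirr : ∀ t, IsIrredRep (π t))
    (hne : ∀ t r : T', t ≠ r → ¬ UnitarilyEquiv (π t) (π r))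
    (hlam : lamT S
        (fun g => Matrix.blockDiagonal fun t : T' => (π t g : Matrix (Fin N) (Fin N) ℂ))
        (fun g => Matrix.blockDiagonal fun t : T' => (π t g : Matrix (Fin N) (Fin N) ℂ))
      ≤ 1 - ε) (t r : T') (htr : t ≠ r) :
    (∑ s ∈ S, ∑ i, ∑ j, ((π t s : Matrix (Fin N) (Fin N) ℂ) i j *
      (starRingEnd ℂ) ((π r s : Matrix (Fin N) (Fin N) ℂ) i j))).re ≤ (1 - ε) * (n * N) := by
  classical
  set BD : G → Matrix (Fin N × T') (Fin N × T') ℂ :=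
    fun g => Matrix.blockDiagonal fun t : T' => (π t g : Matrix (Fin N) (Fin N) ℂ) with hBD
  -- blockDiagonal of unitaries is unitary
  have hBDu : ∀ g, BD g ∈ Matrix.unitaryGroup (Fin N × T') ℂ := by
    intro g
    rw [Matrix.mem_unitaryGroup_iff]
    rw [hBD, Matrix.star_eq_conjTranspose, Matrix.blockDiagonal_conjTranspose,
      ← Matrix.blockDiagonal_mul, ← Matrix.blockDiagonal_one]
    have h6 : (fun u : T' => (π u g : Matrix (Fin N) (Fin N) ℂ) *
        (π u g : Matrix (Fin N) (Fin N) ℂ)ᴴ) = (1 : T' → Matrix (Fin N) (Fin N) ℂ) := by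
      funext u
      have h5 := (Unitary.mem_iff.mp (π u g).2).2
      rw [Matrix.star_eq_conjTranspose] at h5
      simpa using h5
    rw [h6]
  set c : ℂ := ((Real.sqrt N : ℝ) : ℂ)⁻¹ with hc
  have hcc : (starRingEnd ℂ) c * c = ((N : ℝ)⁻¹ : ℂ) := by
    rw [hc]
    have h1 : (starRingEnd ℂ) (((Real.sqrt N : ℝ) : ℂ)⁻¹) = ((Real.sqrt N : ℝ) : ℂ)⁻¹ := by
      rw [map_inv₀, Complex.conj_ofReal]
    rw [h1, ← mul_inv, ← Complex.ofReal_mul, Real.mul_self_sqrt (Nat.cast_nonneg N)]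
  set x : Matrix (Fin N × T') (Fin N × T') ℂ :=
    Matrix.of (fun p q => if p.2 = t ∧ q = (p.1, r) then c else 0) with hx
  have hxsum : ∀ (F : (Fin N × T') → (Fin N × T') → ℂ),
      (∑ p : Fin N × T', ∑ q : Fin N × T', if p.2 = t ∧ q = (p.1, r) then F p q else 0)
        = ∑ i, F (i, t) (i, r) := by
    intro F
    have h1 : ∀ p : Fin N × T',
        (∑ q : Fin N × T', if p.2 = t ∧ q = (p.1, r) then F p q else 0)
          = if p.2 = t then F p (p.1, r) else 0 := by
      intro p
      by_cases h : p.2 = t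
      · simp [h]
      · simp [h]
    simp_rw [h1]
    rw [Fintype.sum_prod_type]
    simp
  have hNC : ((N:ℝ) : ℂ) ≠ 0 := by
    have : (0:ℝ) < N := by exact_mod_cast hN1
    exact_mod_cast this.ne'
  -- (a) unit trace
  have htrx : (xᴴ * x).trace = 1 := by
    rw [trace_conj_mul, Fintype.sum_prod_type]
    have hpt : ∀ p q : Fin N × T', (starRingEnd ℂ) (x p q) * (x p q)
        = if p.2 = t ∧ q = (p.1, r) then (starRingEnd ℂ) c * c else 0 := by
      intro p q
      rw [hx]
      simp only [Matrix.of_apply]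
      split <;> simp
    simp_rw [hpt]
    rw [hxsum (fun _ _ => (starRingEnd ℂ) c * c)]
    rw [hcc, Finset.sum_const, Finset.card_univ, Fintype.card_fin, nsmul_eq_mul]
    push_cast
    exact mul_inv_cancel₀ (by exact_mod_cast hNC)
  -- (b) orthogonality to intertwiners
  have horth : ∀ y : Matrix (Fin N × T') (Fin N × T') ℂ,
      (∀ g : G, BD g * y = y * BD g) → (yᴴ * x).trace = 0 := by
    intro y hy
    set yb : Matrix (Fin N) (Fin N) ℂ := Matrix.of (fun i j => y (i, t) (j, r)) with hyb
    have hybint : ∀ g : G, (π t g : Matrix (Fin N) (Fin N) ℂ) * yb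
        = yb * (π r g : Matrix (Fin N) (Fin N) ℂ) := by
      intro g
      ext i j
      have h0 : (BD g * y) (i, t) (j, r) = (y * BD g) (i, t) (j, r) := by rw [hy g]
      rw [hBD] at h0
      simp only [Matrix.mul_apply, Matrix.blockDiagonal_apply, Fintype.sum_prod_type,
        ite_mul, mul_ite, zero_mul, mul_zero] at h0
      simp only [Finset.sum_ite_eq, Finset.sum_ite_eq', Finset.mem_univ, if_true] at h0
      simpa [Matrix.mul_apply, hyb] using h0
    have hyb0 : yb = 0 := schur_zero hN1 (π t) (π r) (hirr r) (hne t r htr) yb hybint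
    rw [trace_conj_mul, Fintype.sum_prod_type]
    have hpt : ∀ p q : Fin N × T', (starRingEnd ℂ) (y p q) * (x p q)
        = if p.2 = t ∧ q = (p.1, r) then (starRingEnd ℂ) (y p q) * c else 0 := by
      intro p q
      rw [hx]
      simp only [Matrix.of_apply]
      split <;> simp
    simp_rw [hpt]
    rw [hxsum (fun p q => (starRingEnd ℂ) (y p q) * c)]
    have : ∀ i : Fin N, y (i, t) (i, r) = 0 := by
      intro i
      have := congrFun (congrFun (congrArg (fun M : Matrix (Fin N) (Fin N) ℂ => (M : Matrix _ _ ℂ)) hyb0) i) i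
      simpa [hyb] using this
    simp [this]
  -- (c) the value
  have hval : ∀ s : G, (xᴴ * (BD s * x * (BD s)ᴴ)).trace
      = ((N:ℝ)⁻¹ : ℂ) * ∑ i, ∑ j, ((π t s : Matrix (Fin N) (Fin N) ℂ) i j *
        (starRingEnd ℂ) ((π r s : Matrix (Fin N) (Fin N) ℂ) i j)) := by
    intro s
    have hM : ∀ i : Fin N, (BD s * x * (BD s)ᴴ) (i, t) (i, r)
        = c * ∑ j, ((π t s : Matrix (Fin N) (Fin N) ℂ) i j *
          (starRingEnd ℂ) ((π r s : Matrix (Fin N) (Fin N) ℂ) i j)) := by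
      intro i
      rw [hBD, hx]
      simp only [Matrix.mul_apply, Matrix.conjTranspose_apply, Matrix.blockDiagonal_apply,
        Matrix.of_apply, Fintype.sum_prod_type, ite_mul, mul_ite, zero_mul, mul_zero,
        Prod.mk.injEq, ite_and, apply_ite star, star_zero]
      simp only [Finset.sum_ite_eq, Finset.sum_ite_eq', Finset.mem_univ, if_true,
        Finset.sum_ite_irrel, Finset.sum_const_zero]
      rw [Finset.mul_sum]
      refine Finset.sum_congr rfl (fun j _ => ?_)
      simp only [Complex.star_def]
      ring
    rw [trace_conj_mul, Fintype.sum_prod_type]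
    have hpt : ∀ p q : Fin N × T', (starRingEnd ℂ) (x p q) * ((BD s * x * (BD s)ᴴ) p q)
        = if p.2 = t ∧ q = (p.1, r) then (starRingEnd ℂ) c * ((BD s * x * (BD s)ᴴ) p q) else 0 := by
      intro p q
      rw [hx]
      simp only [Matrix.of_apply]
      split <;> simp
    simp_rw [hpt]
    rw [hxsum (fun p q => (starRingEnd ℂ) c * ((BD s * x * (BD s)ᴴ) p q))]
    simp_rw [hM, ← mul_assoc]
    rw [← Finset.mul_sum, hcc]
  -- membership in the sup set
  set K : Set ℝ := {r' : ℝ | ∃ x0 : Matrix (Fin N × T') (Fin N × T') ℂ, (x0ᴴ * x0).trace = 1 ∧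
    (∀ y : Matrix (Fin N × T') (Fin N × T') ℂ, (∀ g : G, BD g * y = y * BD g) → (yᴴ * x0).trace = 0) ∧
    r' = (∑ s ∈ S, (x0ᴴ * (BD s * x0 * (BD s)ᴴ)).trace).re} with hK
  set R : ℝ := (∑ s ∈ S, (xᴴ * (BD s * x * (BD s)ᴴ)).trace).re with hR
  have hmem : R ∈ K := ⟨x, htrx, horth, rfl⟩
  have hbdd : BddAbove K := by
    refine ⟨n, ?_⟩
    rintro r' ⟨x0, hx0, -, rfl⟩
    rw [Complex.re_sum]
    calc (∑ s ∈ S, ((x0ᴴ * (BD s * x0 * (BD s)ᴴ)).trace).re)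
        ≤ ∑ s ∈ S, 1 := Finset.sum_le_sum (fun s _ => cs_bound (BD s) x0 (hBDu s) hx0)
      _ = n := by rw [Finset.sum_const, hn, nsmul_eq_mul, mul_one]
  have hRsup : R ≤ sSup K := le_csSup hbdd hmem
  have hnpos : (0:ℝ) < n := by exact_mod_cast hn1
  have hlam' : sSup K ≤ (1 - ε) * n := by
    rw [lamT, hn] at hlam
    rw [← hK] at hlam
    have hinv : (n:ℝ) * (n:ℝ)⁻¹ = 1 := mul_inv_cancel₀ hnpos.ne'
    have h7 := mul_le_mul_of_nonneg_left hlam hnpos.le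
    rw [← mul_assoc, hinv, one_mul] at h7
    nlinarith [h7]
  have hRle : R ≤ (1 - ε) * n := le_trans hRsup hlam'
  have hRval : R = (N:ℝ)⁻¹ * (∑ s ∈ S, ∑ i, ∑ j, ((π t s : Matrix (Fin N) (Fin N) ℂ) i j *
      (starRingEnd ℂ) ((π r s : Matrix (Fin N) (Fin N) ℂ) i j))).re := by
    rw [hR]
    simp_rw [hval]
    rw [← Finset.mul_sum, ← Complex.ofReal_inv, Complex.re_ofReal_mul]
  have hNpos : (0:ℝ) < N := by exact_mod_cast hN1
  rw [hRval] at hRle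
  have hinvN : (N:ℝ) * (N:ℝ)⁻¹ = 1 := mul_inv_cancel₀ hNpos.ne'
  have h8 := mul_le_mul_of_nonneg_left hRle hNpos.le
  rw [← mul_assoc, hinvN, one_mul] at h8
  nlinarith [h8]

/-- If `(π_t)_{t∈T'}` are pairwise non-equivalent irreducible `N`-dimensional
unitary representations of `G` whose direct sum `π` satisfies
`λ(π⊗π̄, S) ≤ 1 − ε` for an `n`-element set `S`, then
`|T'| ≤ (1 + 2/√(2ε))^{2nN²}`. -/
theorem stmt7 {G : Type} [Group G] (S : Finset G) {n N : ℕ} (hn : S.card = n)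
    (hn1 : 1 ≤ n) (hN1 : 1 ≤ N) {ε : ℝ} (hε : 0 < ε) (hε1 : ε < 1)
    {T' : Type} [Fintype T'] [DecidableEq T']
    (π : T' → G →* Matrix.unitaryGroup (Fin N) ℂ)
    (hirr : ∀ t, IsIrredRep (π t))
    (hne : ∀ t r : T', t ≠ r → ¬ UnitarilyEquiv (π t) (π r))
    (hlam : lamT S
        (fun g => Matrix.blockDiagonal fun t : T' => (π t g : Matrix (Fin N) (Fin N) ℂ))
        (fun g => Matrix.blockDiagonal fun t : T' => (π t g : Matrix (Fin N) (Fin N) ℂ))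
      ≤ 1 - ε) :
    (Fintype.card T' : ℝ) ≤ (1 + 2 / Real.sqrt (2 * ε)) ^ (2 * n * N ^ 2) := by
  classical
  have hpair := pair_bound S hn hn1 hN1 π hirr hne hlam
  have hnN : (0:ℝ) < (n:ℝ) * N := by
    have h1 : (0:ℝ) < n := by exact_mod_cast hn1
    have h2 : (0:ℝ) < N := by exact_mod_cast hN1
    positivity
  set s0 : ℂ := ((Real.sqrt ((n:ℝ) * N) : ℝ) : ℂ)⁻¹ with hs0
  have hss : (starRingEnd ℂ) s0 * s0 = ((((n:ℝ) * N)⁻¹ : ℝ) : ℂ) := by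
    rw [hs0, map_inv₀, Complex.conj_ofReal, ← mul_inv, ← Complex.ofReal_mul,
      Real.mul_self_sqrt hnN.le, Complex.ofReal_inv]
  set v : T' → EuclideanSpace ℂ ({s // s ∈ S} × Fin N × Fin N) := fun u => (WithLp.equiv 2 (({s // s ∈ S} × Fin N × Fin N) → ℂ)).symm
    (fun q => s0 * (π u q.1.1 : Matrix (Fin N) (Fin N) ℂ) q.2.1 q.2.2) with hv
  have hinner : ∀ u w : T', (inner ℂ (v u) (v w) : ℂ) =
      ((((n:ℝ) * N)⁻¹ : ℝ) : ℂ) * ∑ s ∈ S, ∑ i, ∑ j,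
        (starRingEnd ℂ) ((π u s : Matrix (Fin N) (Fin N) ℂ) i j) *
          ((π w s : Matrix (Fin N) (Fin N) ℂ) i j) := by
    intro u w
    have hterm : ∀ q : {s // s ∈ S} × Fin N × Fin N,
        (starRingEnd ℂ) (s0 * (π u q.1.1 : Matrix (Fin N) (Fin N) ℂ) q.2.1 q.2.2) *
          (s0 * (π w q.1.1 : Matrix (Fin N) (Fin N) ℂ) q.2.1 q.2.2)
        = ((((n:ℝ) * N)⁻¹ : ℝ) : ℂ) *
          ((starRingEnd ℂ) ((π u q.1.1 : Matrix (Fin N) (Fin N) ℂ) q.2.1 q.2.2) *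
            ((π w q.1.1 : Matrix (Fin N) (Fin N) ℂ) q.2.1 q.2.2)) := by
      intro q
      rw [RingHom.map_mul, ← hss]
      ring
    rw [PiLp.inner_apply]
    simp only [RCLike.inner_apply', hv, WithLp.equiv_symm_apply, WithLp.ofLp_toLp]
    simp_rw [hterm]
    rw [← Finset.mul_sum]
    congr 1
    rw [← Finset.sum_coe_sort S (fun s => ∑ i, ∑ j,
      (starRingEnd ℂ) ((π u s : Matrix (Fin N) (Fin N) ℂ) i j) *
        ((π w s : Matrix (Fin N) (Fin N) ℂ) i j))]
    rw [Fintype.sum_prod_type]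
    congr 1
    ext s
    rw [Fintype.sum_prod_type]
  have hnorm : ∀ u : T', ‖v u‖ = 1 := by
    intro u
    have h1 : (inner ℂ (v u) (v u) : ℂ) = 1 := by
      rw [hinner u u]
      have h2 : ∀ s : G, s ∈ S → (∑ i, ∑ j,
          (starRingEnd ℂ) ((π u s : Matrix (Fin N) (Fin N) ℂ) i j) *
            ((π u s : Matrix (Fin N) (Fin N) ℂ) i j)) = ((N:ℝ) : ℂ) := by
        intro s _
        have h3 := unitary_entries_sum (π u s : Matrix (Fin N) (Fin N) ℂ) (π u s).2
        calc (∑ i, ∑ j, (starRingEnd ℂ) ((π u s : Matrix (Fin N) (Fin N) ℂ) i j) *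
              ((π u s : Matrix (Fin N) (Fin N) ℂ) i j))
            = ∑ i, ∑ j, ((Complex.normSq ((π u s : Matrix (Fin N) (Fin N) ℂ) i j) : ℝ) : ℂ) := by
              congr 1; ext i; congr 1; ext j
              rw [← Complex.normSq_eq_conj_mul_self]
          _ = (((∑ i, ∑ j, Complex.normSq ((π u s : Matrix (Fin N) (Fin N) ℂ) i j)) : ℝ) : ℂ) := by
              norm_cast
          _ = ((N:ℝ) : ℂ) := by rw [h3]
      rw [Finset.sum_congr rfl h2, Finset.sum_const, hn, nsmul_eq_mul]
      rw [← Complex.ofReal_natCast, ← Complex.ofReal_mul, ← Complex.ofReal_mul,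
        ← Complex.ofReal_one]
      congr 1
      field_simp
    have h4 : ‖v u‖ ^ 2 = 1 := by
      rw [← inner_self_eq_norm_sq (𝕜 := ℂ), h1]
      norm_num
    nlinarith [norm_nonneg (v u)]
  have hsep : ∀ u w : T', u ≠ w → Real.sqrt (2 * ε) ≤ ‖v u - v w‖ := by
    intro u w huw
    have hre : (inner ℂ (v u) (v w) : ℂ).re ≤ 1 - ε := by
      rw [hinner u w]
      rw [Complex.re_ofReal_mul]
      set T1 : ℂ := ∑ s ∈ S, ∑ i, ∑ j,
        (starRingEnd ℂ) ((π u s : Matrix (Fin N) (Fin N) ℂ) i j) *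
          ((π w s : Matrix (Fin N) (Fin N) ℂ) i j) with hT1
      set T2 : ℂ := ∑ s ∈ S, ∑ i, ∑ j, ((π u s : Matrix (Fin N) (Fin N) ℂ) i j *
        (starRingEnd ℂ) ((π w s : Matrix (Fin N) (Fin N) ℂ) i j)) with hT2
      have hT12 : T1 = (starRingEnd ℂ) T2 := by
        rw [hT1, hT2, map_sum]
        refine Finset.sum_congr rfl (fun s _ => ?_)
        rw [map_sum]
        refine Finset.sum_congr rfl (fun i _ => ?_)
        rw [map_sum]
        refine Finset.sum_congr rfl (fun j _ => ?_)
        rw [RingHom.map_mul, Complex.conj_conj, mul_comm]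
      have hT1re : T1.re = T2.re := by rw [hT12, Complex.conj_re]
      rw [hT1re]
      have h5 := hpair u w huw
      rw [← hT2] at h5
      calc ((n:ℝ) * N)⁻¹ * T2.re ≤ ((n:ℝ) * N)⁻¹ * ((1 - ε) * (n * N)) := by
            apply mul_le_mul_of_nonneg_left h5 (by positivity)
        _ = 1 - ε := by field_simp
    have hns : ‖v u - v w‖ ^ 2 = 2 - 2 * (inner ℂ (v u) (v w) : ℂ).re := by
      have := @norm_sub_sq ℂ (EuclideanSpace ℂ ({s // s ∈ S} × Fin N × Fin N)) _ _ _ (v u) (v w)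
      rw [hnorm u, hnorm w] at this
      rw [this, RCLike.re_to_complex]
      ring
    have h6 : 2 * ε ≤ ‖v u - v w‖ ^ 2 := by rw [hns]; linarith
    calc Real.sqrt (2 * ε) ≤ Real.sqrt (‖v u - v w‖ ^ 2) := Real.sqrt_le_sqrt h6
      _ = ‖v u - v w‖ := Real.sqrt_sq (norm_nonneg _)
  -- transfer to a real Euclidean space and apply packing
  haveI : FiniteDimensional ℝ (EuclideanSpace ℂ ({s // s ∈ S} × Fin N × Fin N)) :=
    Module.Finite.trans ℂ (EuclideanSpace ℂ ({s // s ∈ S} × Fin N × Fin N))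
  set L := (stdOrthonormalBasis ℝ (EuclideanSpace ℂ ({s // s ∈ S} × Fin N × Fin N))).repr with hL
  have hδ : 0 < Real.sqrt (2 * ε) := Real.sqrt_pos.mpr (by linarith)
  have hcard := packing (fun u : T' => L (v u)) hδ
    (fun u => by rw [LinearIsometryEquiv.norm_map, hnorm u])
    (fun u w huw => by
      rw [← LinearIsometryEquiv.map_sub, LinearIsometryEquiv.norm_map]
      exact hsep u w huw)
  have hfr : Module.finrank ℝ (EuclideanSpace ℂ ({s // s ∈ S} × Fin N × Fin N)) = 2 * n * N ^ 2 := by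
    have h1 : Module.finrank ℝ ℂ * Module.finrank ℂ (EuclideanSpace ℂ ({s // s ∈ S} × Fin N × Fin N))
        = Module.finrank ℝ (EuclideanSpace ℂ ({s // s ∈ S} × Fin N × Fin N)) :=
      Module.finrank_mul_finrank ℝ ℂ _
    rw [← h1, Complex.finrank_real_complex, finrank_euclideanSpace]
    simp only [Fintype.card_prod, Fintype.card_coe, Fintype.card_fin, hn]
    ring
  rw [hfr] at hcard
  exact hcard
end

section
/- The matrix ring M_k(F₂) over the field with two elements is generated as a ring by the two elements a = e₁₂ (the elementary matrix unit) and b = e₁₂ + e₂₃ + ⋯ + e_{k−1,k} + e_{k1} (a shift-type matrix), for k ≥ 2. -/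
/-!
Right multiplication of a matrix unit by the cyclic shift `b` moves its column forward and left
multiplication moves its row backward, so every matrix unit `e_ij` is a product `b^r a b^s`.
Over `F₂` every matrix is a sum of matrix units.
-/

open Matrix

section CyclicShift

variable {n : ℕ} [NeZero n] {R : Type*} [Semiring R]

variable (n R) in
def cyclicShift : Matrix (Fin n) (Fin n) R :=
  ∑ i : Fin n, single i (i + 1) 1

theorem single_mul_cyclicShift (i j : Fin n) (c : R) :
    single i j c * cyclicShift n R = single i (j + 1) c := by
  rw [cyclicShift, Finset.mul_sum, Finset.sum_eq_single j]
  · rw [single_mul_single_same, mul_one]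
  · exact fun l _ hl => single_mul_single_of_ne (h := Ne.symm hl) ..
  · exact fun h => absurd (Finset.mem_univ j) h

theorem cyclicShift_mul_single (i j : Fin n) (c : R) :
    cyclicShift n R * single i j c = single (i - 1) j c := by
  rw [cyclicShift, Finset.sum_mul, Finset.sum_eq_single (i - 1)]
  · rw [sub_add_cancel, single_mul_single_same, one_mul]
  · exact fun l _ hl => single_mul_single_of_ne (h := fun h => hl (eq_sub_of_add_eq h)) ..
  · exact fun h => absurd (Finset.mem_univ _) h

open Fin.NatCast in
theorem single_mem_of_cyclicShift_mem {S : Type*} [SetLike S (Matrix (Fin n) (Fin n) R)]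
    [MulMemClass S (Matrix (Fin n) (Fin n) R)] {s : S} (hshift : cyclicShift n R ∈ s)
    {i₀ j₀ : Fin n} {c : R} (hunit : single i₀ j₀ c ∈ s) (i j : Fin n) : single i j c ∈ s := by
  have hcol : ∀ m : ℕ, single i₀ (j₀ + m) c ∈ s := by
    intro m
    induction m with
    | zero => simpa using hunit
    | succ m ih =>
      rw [Nat.cast_succ, ← add_assoc, ← single_mul_cyclicShift]
      exact mul_mem ih hshift
  have hrow : ∀ m : ℕ, single (i₀ - m) j c ∈ s := by
    intro m
    induction m with
    | zero =>
      have := hcol (j - j₀).val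
      rwa [Fin.cast_val_eq_self, add_sub_cancel, ← sub_zero i₀, ← Nat.cast_zero] at this
    | succ m ih =>
      rw [Nat.cast_succ, ← sub_sub, ← cyclicShift_mul_single]
      exact mul_mem hshift ih
  simpa using hrow (i₀ - i).val

end CyclicShift

theorem Matrix.mem_of_forall_single_one_mem {ι : Type*} [Fintype ι] [DecidableEq ι] {p : ℕ}
    [NeZero p] {S : Type*} [SetLike S (Matrix ι ι (ZMod p))]
    [AddSubmonoidClass S (Matrix ι ι (ZMod p))] {s : S} (h : ∀ i j, single i j 1 ∈ s)
    (M : Matrix ι ι (ZMod p)) : M ∈ s := by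
  rw [matrix_eq_sum_single M]
  refine sum_mem fun i _ => sum_mem fun j _ => ?_
  rw [← ZMod.natCast_zmod_val (M i j), ← nsmul_one, ← smul_single]
  exact nsmul_mem (h i j) _

/-- `M_k(F₂)` is generated as a ring by `a = e₁₂` and the cyclic shift
`b = e₁₂ + e₂₃ + ⋯ + e_{k−1,k} + e_{k,1}`, for `k ≥ 2`. -/
theorem stmt14 (k : ℕ) (hk : 2 ≤ k) :
    Subring.closure
      ({Matrix.single (⟨0, by omega⟩ : Fin k) (⟨1, by omega⟩ : Fin k) (1 : ZMod 2),
        ∑ i : Fin k, Matrix.single i (i + ⟨1, by omega⟩) (1 : ZMod 2)} :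
          Set (Matrix (Fin k) (Fin k) (ZMod 2))) = ⊤ := by
  have : NeZero k := ⟨by omega⟩
  have h1 : (⟨1, by omega⟩ : Fin k) = 1 := Fin.ext (Nat.mod_eq_of_lt hk).symm
  rw [h1, eq_top_iff]
  have hshift : cyclicShift k (ZMod 2) ∈ Subring.closure
      {single (⟨0, by omega⟩ : Fin k) 1 1, cyclicShift k (ZMod 2)} :=
    Subring.subset_closure (Set.mem_insert_of_mem _ rfl)
  exact fun M _ => mem_of_forall_single_one_mem
    (single_mem_of_cyclicShift_mem hshift (Subring.subset_closure (Set.mem_insert _ _))) M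
end

section
/- Let R be a simple (nonzero) ring and m ≥ 1. Let A ⊆ R^m be a subring such that (i) each coordinate projection p_{i}: A → R is surjective, and (ii) for each coordinate i there exists x ∈ A with x_i = 0 and x_j ≠ 0 for all j ≠ i. Suppose moreover that for every subset I of coordinates with |I| < m the projection p_I(A) already equals R^I. Then under these hypotheses p_I(A) = R^I for all subsets I, i.e., A = R^m. More precisely: by induction on |I|, if for I with |I| = m′ one picks i ∈ I and the ideal 𝓘 = {y ∈ R^{I∖{i}} : (0,y) ∈ p_I(A)} of R^{I∖{i}}, then condition (ii) together with simplicity of each factor forces 𝓘 = R^{I∖{i}}, hence p_I(A) = R^I. -/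
/-!
Fix a coordinate `i`. Since `A` projects onto the complementary coordinates, multiplying an
element of `A` that vanishes at `i` by an arbitrary vector again lands in `A`; applied to the
separating element this puts a nonzero multiple of the basis vector `e_j` into `A` for every
`j ≠ i`. For each `j` the set `{r | r e_j ∈ A}` is a two-sided ideal of the `j`-th factor (the
`j`-th projection of `A` being onto), so by simplicity it is everything. Thus `A` contains every
vector vanishing at `i`, and together with surjectivity at `i` this gives `A = ⊤`.
-/

namespace Subring

variable {ι : Type*} [DecidableEq ι] {R : ι → Type*} [∀ j, Ring (R j)]
  (A : Subring (∀ j, R j))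

def singleIdeal (j : ι) (hj : ∀ r : R j, ∃ a ∈ A, a j = r) : TwoSidedIdeal (R j) :=
  TwoSidedIdeal.mk' {r | Pi.single j r ∈ A}
    (by simp only [Set.mem_ofPred_eq, Pi.single_zero, zero_mem])
    (fun hx hy => by simpa only [Set.mem_ofPred_eq, Pi.single_add] using add_mem hx hy)
    (fun hx => by simpa only [Set.mem_ofPred_eq, Pi.single_neg] using neg_mem hx)
    (fun {x y} hy => by
      obtain ⟨a, ha, rfl⟩ := hj x
      simpa only [Set.mem_ofPred_eq, Pi.single_mul_right] using mul_mem ha hy)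
    (fun {x y} hx => by
      obtain ⟨a, ha, rfl⟩ := hj y
      simpa only [Set.mem_ofPred_eq, Pi.single_mul_left] using mul_mem hx ha)

theorem single_mem_of_single_mem_of_ne_zero {j : ι} [IsSimpleRing (R j)]
    (hj : ∀ r : R j, ∃ a ∈ A, a j = r) {x : R j} (hx : x ≠ 0) (hxA : Pi.single j x ∈ A)
    (r : R j) : Pi.single j r ∈ A := by
  have hone : (1 : R j) ∈ A.singleIdeal j hj :=
    IsSimpleRing.one_mem_of_ne_zero_mem _ hx ((TwoSidedIdeal.mem_mk' ..).2 hxA)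
  simpa only [singleIdeal, mul_one, TwoSidedIdeal.mem_mk', Set.mem_ofPred_eq] using
    (A.singleIdeal j hj).mul_mem_left r 1 hone

theorem single_apply_mem_of_apply_eq_zero {i j : ι} (hji : j ≠ i)
    (hcompl : ∀ y : ∀ k, R k, ∃ a ∈ A, ∀ k, k ≠ i → a k = y k)
    {x : ∀ k, R k} (hx : x ∈ A) (hxi : x i = 0) : Pi.single j (x j) ∈ A := by
  obtain ⟨a, ha, hae⟩ := hcompl (Pi.single j 1)
  -- `a` and `e_j` differ only at `i`, where `x` vanishes.
  have hax : a * x = Pi.single j (x j) := by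
    rw [← one_mul (x j), Pi.single_mul_left]
    funext k
    by_cases hk : k = i
    · subst hk
      simp only [Pi.mul_apply, hxi, mul_zero]
    · rw [Pi.mul_apply, Pi.mul_apply, hae k hk]
  exact hax ▸ mul_mem ha hx

theorem mem_of_forall_single_mem [Fintype ι] {z : ∀ j, R j}
    (h : ∀ j, Pi.single j (z j) ∈ A) : z ∈ A := by
  rw [← Finset.univ_sum_single z]
  exact sum_mem fun j _ => h j

theorem eq_top_of_surjective_of_separating [Fintype ι] [∀ j, IsSimpleRing (R j)] (i : ι)
    (hsurj : ∀ j, ∀ r : R j, ∃ a ∈ A, a j = r)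
    (hsep : ∃ x ∈ A, x i = 0 ∧ ∀ j, j ≠ i → x j ≠ 0)
    (hcompl : ∀ y : ∀ k, R k, ∃ a ∈ A, ∀ k, k ≠ i → a k = y k) :
    A = ⊤ := by
  obtain ⟨x, hxA, hxi, hx⟩ := hsep
  have hsingle : ∀ j, j ≠ i → ∀ r : R j, Pi.single j r ∈ A := fun j hji =>
    A.single_mem_of_single_mem_of_ne_zero (hsurj j) (hx j hji)
      (A.single_apply_mem_of_apply_eq_zero hji hcompl hxA hxi)
  refine eq_top_iff.2 fun y _ => ?_
  obtain ⟨a, ha, hai⟩ := hsurj i (y i)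
  have hya : y - a ∈ A := A.mem_of_forall_single_mem fun j => by
    by_cases hji : j = i
    · subst hji
      simp only [Pi.sub_apply, hai, sub_self, Pi.single_zero, zero_mem]
    · exact hsingle j hji _
  simpa only [sub_add_cancel] using add_mem hya ha

end Subring

theorem stmt15_general {R : Type} [Ring R] [IsSimpleRing R] (m : ℕ)
    (A : Subring (∀ _ : Fin m, R))
    (hsurj : ∀ i : Fin m, ∀ y : R, ∃ x ∈ A, x i = y)
    (hsep : ∀ i : Fin m, ∃ x ∈ A, x i = 0 ∧ ∀ j : Fin m, j ≠ i → x j ≠ 0)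
    (hproper : ∀ I : Finset (Fin m), I.card < m →
      ∀ y : Fin m → R, ∃ x ∈ A, ∀ i ∈ I, x i = y i) :
    A = ⊤ := by
  rcases isEmpty_or_nonempty (Fin m) with _ | ⟨⟨i⟩⟩
  · exact eq_top_iff.2 fun x _ => Subsingleton.elim 0 x ▸ zero_mem A
  have hcard : ({i}ᶜ : Finset (Fin m)).card < m := by
    rw [Finset.card_compl, Finset.card_singleton, Fintype.card_fin]
    exact Nat.sub_lt i.pos one_pos
  refine A.eq_top_of_surjective_of_separating i hsurj (hsep i) fun y => ?_
  obtain ⟨x, hxA, hx⟩ := hproper {i}ᶜ hcard y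
  exact ⟨x, hxA, fun k hk => hx k (Finset.mem_compl.2 (Finset.notMem_singleton.2 hk))⟩

/-- Induction step for surjectivity of a subring of a power of a simple ring:
if `A ⊆ R^m` is a subring whose coordinate projections are surjective, which
for each coordinate `i` contains an element vanishing exactly at `i`, and which
projects onto `R^I` for every proper subset `I` of coordinates, then `A = R^m`. -/
theorem stmt15 {R : Type} [Ring R] [Nontrivial R] [IsSimpleRing R] (m : ℕ)
    (A : Subring (∀ _ : Fin m, R))
    (hsurj : ∀ i : Fin m, ∀ y : R, ∃ x ∈ A, x i = y)
    (hsep : ∀ i : Fin m, ∃ x ∈ A, x i = 0 ∧ ∀ j : Fin m, j ≠ i → x j ≠ 0)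
    (hproper : ∀ I : Finset (Fin m), I.card < m →
      ∀ y : Fin m → R, ∃ x ∈ A, ∀ i ∈ I, x i = y i) :
    A = ⊤ :=
  stmt15_general m A hsurj hsep hproper
end

section
/- Assume (Theorem 1.3 of [P]) that for 0 < ε < 1 there exist β_ε > 0 and n₀(ε) such that for all n ≥ n₀ and all N ≥ 1 there is a set 𝒯 ⊂ U(N)^n with |𝒯| ≥ exp(β_ε n N²), satisfying ‖Σ_j u_j ⊗ v̄_j‖ ≤ n(1−ε) for all distinct u, v ∈ 𝒯 and ‖(Σ_j u_j ⊗ ū_j)|_{I^⊥}‖ ≤ n(1−ε) for all u ∈ 𝒯. Then, setting s_j = ⊕_{t∈𝒯} t_j ∈ U(|𝒯|N), G the subgroup of U(|𝒯|N) generated by S = {s₁,…,s_n}, and π: G → U(|𝒯|N) the inclusion representation, the representations π_t := (t-th block of π) are pairwise non-equivalent irreducible N-dimensional representations of G whose direct sum is π, and |𝒯| ≥ exp(β_ε n N²). -/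
/-!
If a matrix `x` intertwines two tuples of unitaries, `u j * x = x * v j`, then
`∑ j u j x (v j)ᴴ = n • x`, so `x` is an eigenvector of `∑ j u j ⊗ v̄ j` with eigenvalue `n`.
A norm bound `n(1 - ε) < n` on that operator therefore forces `x = 0`. For irreducibility apply
this with `v = u` to the traceless part of an element of the commutant; for non-equivalence
apply it to the adjoint of a unitary intertwiner, which cannot vanish.
-/

open Matrix
open scoped ComplexOrder

section Frobenius

variable {m k : Type*} [Fintype m] [Fintype k]

lemma re_trace_conjTranspose_mul_self_eq_zero_iff {x : Matrix m k ℂ} :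
    (xᴴ * x).trace.re = 0 ↔ x = 0 := by
  have him := (Complex.nonneg_iff.mp (posSemidef_conjTranspose_mul_self x).trace_nonneg).2
  rw [← trace_conjTranspose_mul_self_eq_zero_iff]
  exact ⟨fun h => Complex.ext h him.symm, fun h => by rw [h, Complex.zero_re]⟩

lemma re_trace_conjTranspose_smul_mul_smul (c : ℂ) (x : Matrix m k ℂ) :
    ((c • x)ᴴ * (c • x)).trace.re = ‖c‖ ^ 2 * (xᴴ * x).trace.re := by
  rw [conjTranspose_smul, smul_mul, Matrix.mul_smul, smul_smul, trace_smul, smul_eq_mul,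
    ← starRingEnd_apply, Complex.conj_mul', ← Complex.ofReal_pow, Complex.re_ofReal_mul]

lemma eq_zero_of_re_trace_smul_le {c : ℂ} {r : ℝ} (hr : r ^ 2 < ‖c‖ ^ 2) {x : Matrix m k ℂ}
    (h : ((c • x)ᴴ * (c • x)).trace.re ≤ r ^ 2 * (xᴴ * x).trace.re) : x = 0 := by
  have hnonneg := (Complex.nonneg_iff.mp (posSemidef_conjTranspose_mul_self x).trace_nonneg).1
  rw [re_trace_conjTranspose_smul_mul_smul] at h
  rw [← re_trace_conjTranspose_mul_self_eq_zero_iff]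
  nlinarith

end Frobenius

lemma sq_mul_one_sub_lt_sq {a ε : ℝ} (ha : 0 < a) (hε : 0 < ε) (hε1 : ε < 1) :
    (a * (1 - ε)) ^ 2 < a ^ 2 :=
  pow_lt_pow_left₀ (by nlinarith) (by nlinarith) two_ne_zero

section Intertwiner

variable {ι m k : Type*} [Fintype ι] [Fintype m] [Fintype k] [DecidableEq k]

lemma sum_mul_mul_conjTranspose_eq_card_smul {u : ι → Matrix m m ℂ} {v : ι → Matrix k k ℂ}
    (hv : ∀ j, v j ∈ unitaryGroup k ℂ) {x : Matrix m k ℂ} (hx : ∀ j, u j * x = x * v j) :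
    ∑ j, u j * x * (v j)ᴴ = (Fintype.card ι : ℂ) • x := by
  have hterm : ∀ j, u j * x * (v j)ᴴ = x := fun j => by
    rw [hx j, Matrix.mul_assoc, ← star_eq_conjTranspose, Unitary.mul_star_self_of_mem (hv j),
      Matrix.mul_one]
  rw [Finset.sum_congr rfl fun j _ => hterm j, Finset.sum_const, Finset.card_univ,
    Nat.cast_smul_eq_nsmul]

lemma eq_zero_of_intertwines {r : ℝ} (hr : r ^ 2 < Fintype.card ι ^ 2)
    {u : ι → Matrix m m ℂ} {v : ι → Matrix k k ℂ} (hv : ∀ j, v j ∈ unitaryGroup k ℂ)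
    {x : Matrix m k ℂ}
    (hbound : ((∑ j, u j * x * (v j)ᴴ)ᴴ * ∑ j, u j * x * (v j)ᴴ).trace.re
      ≤ r ^ 2 * (xᴴ * x).trace.re)
    (hx : ∀ j, u j * x = x * v j) : x = 0 := by
  rw [sum_mul_mul_conjTranspose_eq_card_smul hv hx] at hbound
  exact eq_zero_of_re_trace_smul_le (by rwa [Complex.norm_natCast]) hbound

end Intertwiner

section Representations

variable {ι m : Type*} [Fintype ι] [Fintype m] [DecidableEq m] [Nonempty m]
  {u : ι → Matrix m m ℂ} {r : ℝ}

lemma exists_eq_smul_one_of_forall_commute (hu : ∀ j, u j ∈ unitaryGroup m ℂ)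
    (hr : r ^ 2 < Fintype.card ι ^ 2)
    (hgap : ∀ y : Matrix m m ℂ, y.trace = 0 →
      ((∑ j, u j * y * (u j)ᴴ)ᴴ * ∑ j, u j * y * (u j)ᴴ).trace.re ≤ r ^ 2 * (yᴴ * y).trace.re)
    {x : Matrix m m ℂ} (hx : ∀ j, u j * x = x * u j) : ∃ c : ℂ, x = c • 1 := by
  set c := x.trace / Fintype.card m
  have htrace : (x - c • 1).trace = 0 := by
    rw [trace_sub, trace_smul, trace_one, smul_eq_mul,
      div_mul_cancel₀ _ (Nat.cast_ne_zero.mpr Fintype.card_ne_zero), sub_self]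
  refine ⟨c, sub_eq_zero.mp (eq_zero_of_intertwines hr hu (hgap _ htrace) fun j => ?_)⟩
  rw [Matrix.mul_sub, Matrix.sub_mul, hx j, Matrix.mul_smul, Matrix.smul_mul, Matrix.mul_one,
    Matrix.one_mul]

lemma not_exists_unitary_intertwiner {v : ι → Matrix m m ℂ} (hv : ∀ j, v j ∈ unitaryGroup m ℂ)
    (hr : r ^ 2 < Fintype.card ι ^ 2)
    (hsep : ∀ x : Matrix m m ℂ,
      ((∑ j, u j * x * (v j)ᴴ)ᴴ * ∑ j, u j * x * (v j)ᴴ).trace.re ≤ r ^ 2 * (xᴴ * x).trace.re) :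
    ¬ ∃ w ∈ unitaryGroup m ℂ, ∀ j, w * u j = v j * w := by
  rintro ⟨w, hw, hint⟩
  have hw₁ : wᴴ * w = 1 := Unitary.star_mul_self_of_mem hw
  have hw₂ : w * wᴴ = 1 := Unitary.mul_star_self_of_mem hw
  have hadj : ∀ j, u j * wᴴ = wᴴ * v j := fun j =>
    calc u j * wᴴ = wᴴ * (w * u j) * wᴴ := by rw [← Matrix.mul_assoc, hw₁, Matrix.one_mul]
      _ = wᴴ * v j := by rw [hint j, Matrix.mul_assoc, Matrix.mul_assoc, hw₂, Matrix.mul_one]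
  have hzero := eq_zero_of_intertwines hr hv (hsep wᴴ) hadj
  rw [hzero, Matrix.mul_zero] at hw₂
  exact zero_ne_one hw₂

end Representations

theorem stmt19_general {n N : ℕ} (hn : 1 ≤ n) (hN : 1 ≤ N) {ε β : ℝ}
    (hε : 0 < ε) (hε1 : ε < 1)
    (𝒯 : Finset (Fin n → Matrix (Fin N) (Fin N) ℂ))
    (hunit : ∀ u ∈ 𝒯, ∀ j, u j ∈ Matrix.unitaryGroup (Fin N) ℂ)
    (hcard : Real.exp (β * n * N ^ 2) ≤ (𝒯.card : ℝ))
    (hsep : ∀ u ∈ 𝒯, ∀ v ∈ 𝒯, u ≠ v →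
      ∀ x : Matrix (Fin N) (Fin N) ℂ,
        (((∑ j, u j * x * (v j)ᴴ)ᴴ * ∑ j, u j * x * (v j)ᴴ).trace).re
          ≤ ((n : ℝ) * (1 - ε)) ^ 2 * ((xᴴ * x).trace).re)
    (hgap : ∀ u ∈ 𝒯, ∀ x : Matrix (Fin N) (Fin N) ℂ, x.trace = 0 →
      (((∑ j, u j * x * (u j)ᴴ)ᴴ * ∑ j, u j * x * (u j)ᴴ).trace).re
        ≤ ((n : ℝ) * (1 - ε)) ^ 2 * ((xᴴ * x).trace).re) :
    (∀ u ∈ 𝒯, ∀ x : Matrix (Fin N) (Fin N) ℂ, (∀ j, u j * x = x * u j) →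
      ∃ c : ℂ, x = c • (1 : Matrix (Fin N) (Fin N) ℂ)) ∧
    (∀ u ∈ 𝒯, ∀ v ∈ 𝒯, u ≠ v →
      ¬ ∃ w ∈ Matrix.unitaryGroup (Fin N) ℂ, ∀ j, w * u j = v j * w) ∧
    Real.exp (β * n * N ^ 2) ≤ (𝒯.card : ℝ) := by
  have : Nonempty (Fin N) := ⟨⟨0, hN⟩⟩
  have hr : ((n : ℝ) * (1 - ε)) ^ 2 < Fintype.card (Fin n) ^ 2 := by
    rw [Fintype.card_fin]
    exact sq_mul_one_sub_lt_sq (by exact_mod_cast hn) hε hε1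
  refine ⟨fun u hu x hx => ?_, fun u hu v hv huv => ?_, hcard⟩
  · exact exists_eq_smul_one_of_forall_commute (hunit u hu) hr (hgap u hu) hx
  · exact not_exists_unitary_intertwiner (hunit v hv) hr (hsep u hu v hv huv)

/-- Given a set `𝒯 ⊂ U(N)^n` with `|𝒯| ≥ exp(β_ε n N²)` such that distinct
`u, v ∈ 𝒯` satisfy `‖∑_j u_j ⊗ v̄_j‖ ≤ n(1−ε)` and each `u ∈ 𝒯` satisfies
`‖(∑_j u_j ⊗ ū_j)|_{I^⊥}‖ ≤ n(1−ε)` (both stated via the Hilbert–Schmidt action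
`x ↦ ∑_j u_j x v_jᴴ`), the block representations `π_t` of the group generated by
the block-diagonal unitaries `s_j = ⊕_{t∈𝒯} t_j` are irreducible (trivial
commutant of each tuple) and pairwise non-equivalent (no unitary intertwiner
between distinct tuples), and `|𝒯| ≥ exp(β_ε n N²)`. -/
theorem stmt19 {n N : ℕ} (hn : 1 ≤ n) (hN : 1 ≤ N) {ε β : ℝ}
    (hε : 0 < ε) (hε1 : ε < 1) (hβ : 0 < β)
    [DecidableEq (Fin n → Matrix (Fin N) (Fin N) ℂ)]
    (𝒯 : Finset (Fin n → Matrix (Fin N) (Fin N) ℂ))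
    (hunit : ∀ u ∈ 𝒯, ∀ j, u j ∈ Matrix.unitaryGroup (Fin N) ℂ)
    (hcard : Real.exp (β * n * N ^ 2) ≤ (𝒯.card : ℝ))
    (hsep : ∀ u ∈ 𝒯, ∀ v ∈ 𝒯, u ≠ v →
      ∀ x : Matrix (Fin N) (Fin N) ℂ,
        (((∑ j, u j * x * (v j)ᴴ)ᴴ * ∑ j, u j * x * (v j)ᴴ).trace).re
          ≤ ((n : ℝ) * (1 - ε)) ^ 2 * ((xᴴ * x).trace).re)
    (hgap : ∀ u ∈ 𝒯, ∀ x : Matrix (Fin N) (Fin N) ℂ, x.trace = 0 →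
      (((∑ j, u j * x * (u j)ᴴ)ᴴ * ∑ j, u j * x * (u j)ᴴ).trace).re
        ≤ ((n : ℝ) * (1 - ε)) ^ 2 * ((xᴴ * x).trace).re) :
    (∀ u ∈ 𝒯, ∀ x : Matrix (Fin N) (Fin N) ℂ, (∀ j, u j * x = x * u j) →
      ∃ c : ℂ, x = c • (1 : Matrix (Fin N) (Fin N) ℂ)) ∧
    (∀ u ∈ 𝒯, ∀ v ∈ 𝒯, u ≠ v →
      ¬ ∃ w ∈ Matrix.unitaryGroup (Fin N) ℂ, ∀ j, w * u j = v j * w) ∧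
    Real.exp (β * n * N ^ 2) ≤ (𝒯.card : ℝ) :=
  stmt19_general hn hN hε hε1 𝒯 hunit hcard hsep hgap
end
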